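/- (Theorem 4, fast rates for the trimmed MLE with labeled data) For every θ ∈ (0,1/2), α ≥ 0 and C₀ > 0 there exists a constant C > 0 such that the following holds: for every n ≥ 1 and every triple (p₁,p₀,q) with q ∈ [θ,1−θ] satisfying the margin assumption MA(C₀,α), if Y₁,…,Yₙ are the labels of n i.i.d. training samples from π and q̂ is the trimmed maximum likelihood estimate, i.e. the projection of (1/n)·Σᵢ 1{Yᵢ=1} onto the interval [θ,1−θ], then E[R(q̂)] − R(q) ≤ C·n^{−(1+α)/2}. -/

import Mathlib

open MeasureTheory

noncomputable section

/-- `P₁(q')`: probability of deciding `H₀` under `H₁`. -/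
def P1 (d : ℕ) (p₁ p₀ : (Fin d → ℝ) → ℝ) (q' : ℝ) : ℝ :=
  ∫ x, (if q' * p₁ x < (1 - q') * p₀ x then p₁ x else 0)

/-- `P₀(q')`: probability of deciding `H₁` under `H₀`. -/
def P0 (d : ℕ) (p₁ p₀ : (Fin d → ℝ) → ℝ) (q' : ℝ) : ℝ :=
  ∫ x, (if (1 - q') * p₀ x ≤ q' * p₁ x then p₀ x else 0)

/-- The risk `R(q') = q·P₁(q') + (1−q)·P₀(q')`. -/
def risk (d : ℕ) (p₁ p₀ : (Fin d → ℝ) → ℝ) (q q' : ℝ) : ℝ :=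
  q * P1 d p₁ p₀ q' + (1 - q) * P0 d p₁ p₀ q'

/-- The joint distribution `π` of `(X,Y)` on `ℝ^d × {0,1}`. -/
def jointMeasure (d : ℕ) (p₁ p₀ : (Fin d → ℝ) → ℝ) (q : ℝ) :
    Measure ((Fin d → ℝ) × Bool) :=
  (volume.withDensity fun x => ENNReal.ofReal (q * p₁ x)).map (fun x => (x, true)) +
    (volume.withDensity fun x => ENNReal.ofReal ((1 - q) * p₀ x)).map (fun x => (x, false))

/-- The regression function `η(x) = q·p₁(x)/(q·p₁(x)+(1−q)·p₀(x))`. -/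
def eta (d : ℕ) (p₁ p₀ : (Fin d → ℝ) → ℝ) (q : ℝ) (x : Fin d → ℝ) : ℝ :=
  q * p₁ x / (q * p₁ x + (1 - q) * p₀ x)

/-- The marginal `P_X`, with density `q·p₁ + (1−q)·p₀`. -/
def margX (d : ℕ) (p₁ p₀ : (Fin d → ℝ) → ℝ) (q : ℝ) : Measure (Fin d → ℝ) :=
  volume.withDensity fun x => ENNReal.ofReal (q * p₁ x + (1 - q) * p₀ x)

/-- The margin assumption MA(C₀,α). -/
def MA (d : ℕ) (p₁ p₀ : (Fin d → ℝ) → ℝ) (q C₀ α : ℝ) : Prop :=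
  ∀ t : ℝ, 0 < t →
    (margX d p₁ p₀ q
        {x | 0 < |eta d p₁ p₀ q x - 1 / 2| ∧ |eta d p₁ p₀ q x - 1 / 2| ≤ t}).toReal ≤
      C₀ * t ^ α

/-- The trimmed MLE of the prior from the labels of the sample `S`: the projection of the
empirical frequency of label `1` onto `[θ, 1−θ]`. -/
def trimmedMLE (d : ℕ) (θ : ℝ) (n : ℕ) (S : Fin n → (Fin d → ℝ) × Bool) : ℝ :=
  max θ (min (1 - θ) ((∑ i, if (S i).2 = true then (1 : ℝ) else 0) / n))

/-!
Moving the decision threshold from the true prior `q` to `r` changes the Bayes decision only where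
`q p₁ - (1 - q) p₀` and `r p₁ - (1 - r) p₀` differ in sign; since they differ by
`(r - q)(p₁ + p₀)` and `θ (p₁ + p₀)` is at most the marginal density, this happens only
where `|η - 1/2| ≤ |r - q| / (2θ)`, at a pointwise cost of `2 |η - 1/2|` times the marginal
density. The margin assumption then gives `R(r) - R(q) ≤ 2 C₀ (|r - q| / (2θ)) ^ (1 + α)`.
Projecting onto `[θ, 1 - θ]` only brings the empirical label frequency closer to `q`, and by
Hoeffding's lemma the centred frequency is sub-Gaussian with variance proxy `1 / (4n)`, so its
`(1 + α)`-th absolute moment is `O(n ^ (-(1 + α) / 2))`.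
-/

open Set ProbabilityTheory Real
open scoped NNReal

structure IsProbDensity {E : Type*} [MeasurableSpace E] (p : E → ℝ) (μ : Measure E) :
    Prop where
  measurable : Measurable p
  nonneg : ∀ x, 0 ≤ p x
  integral_eq_one : ∫ x, p x ∂μ = 1

namespace IsProbDensity

variable {E : Type*} [MeasurableSpace E] {μ : Measure E} {p : E → ℝ}

lemma integrable (hp : IsProbDensity p μ) : Integrable p μ :=
  integrable_of_integral_eq_one hp.integral_eq_one

lemma withDensity_const_mul_univ (hp : IsProbDensity p μ) {c : ℝ} (hc : 0 ≤ c) :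
    μ.withDensity (fun x => ENNReal.ofReal (c * p x)) univ = ENNReal.ofReal c := by
  simp_rw [withDensity_apply _ MeasurableSet.univ, Measure.restrict_univ,
    ENNReal.ofReal_mul hc]
  rw [lintegral_const_mul' _ _ ENNReal.ofReal_ne_top,
    ← ofReal_integral_eq_lintegral_ofReal hp.integrable (ae_of_all _ hp.nonneg),
    hp.integral_eq_one, ENNReal.ofReal_one, mul_one]

end IsProbDensity

lemma MeasureTheory.Integrable.ite_zero {E : Type*} [MeasurableSpace E] {μ : Measure E}
    {f : E → ℝ} (hf : Integrable f μ) {P : E → Prop} [DecidablePred P]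
    (hP : MeasurableSet {x | P x}) : Integrable (fun x => if P x then f x else 0) μ := by
  refine (hf.indicator hP).congr (ae_of_all _ fun x => ?_)
  simp [indicator_apply]

/-- The two threshold tests can only disagree when `a - b` and `c - c'` have opposite signs,
which forces `|a - b| ≤ |(c - c') - (a - b)|`. -/
lemma ite_flip_le (a b c c' : ℝ) :
    ((if c < c' then a else 0) + (if c' ≤ c then b else 0)) -
        ((if a < b then a else 0) + (if b ≤ a then b else 0)) ≤
      if 0 < |a - b| ∧ |a - b| ≤ |(c - c') - (a - b)| then |a - b| else 0 := by
  have hrhs : 0 ≤ if 0 < |a - b| ∧ |a - b| ≤ |(c - c') - (a - b)| then |a - b| else 0 := by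
    split_ifs <;> simp
  by_cases hcc : c < c' <;> by_cases hab : a < b
  · simpa [hcc, hab, not_le.2 hcc, not_le.2 hab] using hrhs
  · rw [if_pos hcc, if_neg (not_le.2 hcc), if_neg hab, if_pos (not_lt.1 hab)]
    rcases (not_lt.1 hab).eq_or_lt with hba | hba
    · simp [hba]
    · have hpos : 0 < a - b := sub_pos.2 hba
      have hshift : a - b ≤ |(c - c') - (a - b)| := le_abs.2 (Or.inr (by linarith))
      rw [abs_of_pos hpos, if_pos ⟨hpos, hshift⟩]
      linarith
  · rw [if_neg hcc, if_pos (not_lt.1 hcc), if_pos hab, if_neg (not_le.2 hab)]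
    have hneg : a - b < 0 := sub_neg.2 hab
    have hshift : -(a - b) ≤ |(c - c') - (a - b)| := le_abs.2 (Or.inl (by linarith))
    rw [abs_of_neg hneg, if_pos ⟨neg_pos.2 hneg, hshift⟩]
    linarith
  · simpa [hcc, hab, not_lt.1 hcc, not_lt.1 hab] using hrhs

lemma Real.rpow_le_rpow_self_mul_exp_sub {p u : ℝ} (hp : 0 < p) (hu : 0 ≤ u) :
    u ^ p ≤ p ^ p * exp (u - p) := by
  have h : u / p ≤ exp (u / p - 1) := by linarith [add_one_le_exp (u / p - 1)]
  calc u ^ p = p ^ p * (u / p) ^ p := by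
        rw [← mul_rpow hp.le (by positivity), mul_div_cancel₀ _ hp.ne']
    _ ≤ p ^ p * exp (u / p - 1) ^ p := by gcongr
    _ = p ^ p * exp (u - p) := by
        rw [← exp_mul]; congr 2; field_simp

namespace ProbabilityTheory.HasSubgaussianMGF

variable {Ω : Type*} [MeasurableSpace Ω] {μ : Measure Ω} {X : Ω → ℝ} {c : ℝ≥0}

lemma integrable_abs_rpow (hX : HasSubgaussianMGF X c μ) {p : ℝ} (hp : 0 < p) :
    Integrable (fun ω => |X ω| ^ p) μ := by
  simpa [Real.norm_eq_abs, hp.le] using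
    (hX.memLp p.toNNReal).integrable_norm_rpow (by simp [hp]) (by simp)

/-- Apply `u ^ p ≤ p ^ p * exp (u - p)` at `u = L |x|`; the scale `L = √(p / c)` balances
`(p / L) ^ p` against the sub-Gaussian bound `exp (c L ^ 2 / 2)` on the two-sided mgf. -/
lemma integral_abs_rpow_le (hX : HasSubgaussianMGF X c μ) (hc : 0 < c) {p : ℝ} (hp : 0 < p) :
    ∫ ω, |X ω| ^ p ∂μ ≤ 2 * (p * c / exp 1) ^ (p / 2) := by
  set L := √(p / c)
  have hL : 0 < L := by positivity
  have hL2 : c * L ^ 2 = p := by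
    rw [sq_sqrt (by positivity)]; field_simp
  have hpointwise : ∀ x : ℝ, |x| ^ p ≤
      (p / L) ^ p * exp (-p) * (exp (L * x) + exp ((-L) * x)) := by
    intro x
    have hexp : exp (L * |x|) ≤ exp (L * x) + exp ((-L) * x) := by
      rcases abs_cases x with ⟨h, -⟩ | ⟨h, -⟩ <;> rw [h]
      · linarith [exp_pos ((-L) * x)]
      · rw [mul_neg, ← neg_mul]; linarith [exp_pos (L * x)]
    calc |x| ^ p = (L * |x|) ^ p / L ^ p := by
          rw [mul_rpow hL.le (abs_nonneg x)]; field_simp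
      _ ≤ p ^ p * exp (L * |x| - p) / L ^ p := by
          gcongr; exact rpow_le_rpow_self_mul_exp_sub hp (by positivity)
      _ = (p / L) ^ p * exp (-p) * exp (L * |x|) := by
          rw [div_rpow hp.le hL.le, sub_eq_add_neg, exp_add]; ring
      _ ≤ _ := by gcongr
  calc ∫ ω, |X ω| ^ p ∂μ
      ≤ ∫ ω, (p / L) ^ p * exp (-p) * (exp (L * X ω) + exp ((-L) * X ω)) ∂μ :=
        integral_mono (hX.integrable_abs_rpow hp)
          (((hX.integrable_exp_mul L).add (hX.integrable_exp_mul (-L))).const_mul _)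
          fun ω => hpointwise (X ω)
    _ = (p / L) ^ p * exp (-p) * (mgf X μ L + mgf X μ (-L)) := by
        rw [integral_const_mul, integral_add (hX.integrable_exp_mul L)
          (hX.integrable_exp_mul (-L))]; rfl
    _ ≤ (p / L) ^ p * exp (-p) * (exp (c * L ^ 2 / 2) + exp (c * (-L) ^ 2 / 2)) := by
        gcongr <;> exact hX.mgf_le _
    _ = 2 * (p * c / exp 1) ^ (p / 2) := by
        have hpL : (p / L) ^ p = (p * c) ^ (p / 2) := by
          have hsq : p * c = (p / L) ^ (2 : ℝ) := by
            rw [rpow_two, div_pow, ← hL2]; field_simp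
          rw [hsq, ← rpow_mul (by positivity)]; ring_nf
        have hexp : exp (-p) * (exp (p / 2) + exp (p / 2)) = 2 / exp 1 ^ (p / 2) := by
          rw [exp_one_rpow, eq_div_iff (exp_pos _).ne', ← two_mul, mul_left_comm, mul_assoc,
            ← exp_add, ← exp_add, show -p + p / 2 + p / 2 = 0 by ring, exp_zero, mul_one]
        rw [neg_sq, hL2, hpL, div_rpow (by positivity) (exp_pos 1).le, mul_assoc, hexp]
        ring

end ProbabilityTheory.HasSubgaussianMGF

section JointMeasure

variable {d : ℕ} {p₁ p₀ : (Fin d → ℝ) → ℝ} {q : ℝ}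

lemma isProbabilityMeasure_jointMeasure (h₁ : IsProbDensity p₁ volume)
    (h₀ : IsProbDensity p₀ volume) (hq : q ∈ Icc (0 : ℝ) 1) :
    IsProbabilityMeasure (jointMeasure d p₁ p₀ q) := by
  constructor
  rw [jointMeasure, Measure.add_apply, Measure.map_apply (by fun_prop) MeasurableSet.univ,
    Measure.map_apply (by fun_prop) MeasurableSet.univ, preimage_univ, preimage_univ,
    h₁.withDensity_const_mul_univ hq.1, h₀.withDensity_const_mul_univ (sub_nonneg.2 hq.2),
    ← ENNReal.ofReal_add hq.1 (sub_nonneg.2 hq.2), add_sub_cancel, ENNReal.ofReal_one]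

lemma integral_label_jointMeasure (h₁ : IsProbDensity p₁ volume) (hq : 0 ≤ q) :
    ∫ y, (if y.2 = true then (1 : ℝ) else 0) ∂(jointMeasure d p₁ p₀ q) = q := by
  have hs : MeasurableSet {y : (Fin d → ℝ) × Bool | y.2 = true} :=
    measurable_snd (measurableSet_singleton true)
  have hind : (fun y : (Fin d → ℝ) × Bool => if y.2 = true then (1 : ℝ) else 0) =
      {y | y.2 = true}.indicator 1 := by
    ext y; simp [indicator_apply]
  rw [hind, integral_indicator_one hs, measureReal_def, jointMeasure, Measure.add_apply,
    Measure.map_apply (by fun_prop) hs, Measure.map_apply (by fun_prop) hs]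
  simp only [preimage_ofPred_eq, ofPred_true, Bool.false_eq_true, ofPred_false, measure_empty,
    add_zero]
  rw [h₁.withDensity_const_mul_univ hq, ENNReal.toReal_ofReal hq]

lemma hasSubgaussianMGF_labelFreq_sub (h₁ : IsProbDensity p₁ volume)
    (h₀ : IsProbDensity p₀ volume) (hq : q ∈ Icc (0 : ℝ) 1) {n : ℕ} (hn : 0 < n) :
    HasSubgaussianMGF (fun S => (∑ i, if (S i).2 = true then (1 : ℝ) else 0) / n - q)
      (4 * n)⁻¹ (Measure.pi fun _ : Fin n => jointMeasure d p₁ p₀ q) := by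
  have := isProbabilityMeasure_jointMeasure h₁ h₀ hq
  set Y : (Fin d → ℝ) × Bool → ℝ := fun y => if y.2 = true then 1 else 0
  have hY : Measurable Y :=
    (measurable_from_top (f := fun b : Bool => if b = true then (1 : ℝ) else 0)).comp
      measurable_snd
  have hlabel : HasSubgaussianMGF (fun y => Y y - q) ((‖(1 : ℝ) - 0‖₊ / 2) ^ 2)
      (jointMeasure d p₁ p₀ q) := by
    have := hasSubgaussianMGF_of_mem_Icc (μ := jointMeasure d p₁ p₀ q) (a := 0) (b := 1)
      hY.aemeasurable
      (ae_of_all _ fun y => by by_cases h : y.2 = true <;> simp [Y, h])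
    rwa [integral_label_jointMeasure h₁ hq.1] at this
  have hcoord : ∀ i : Fin n,
      HasSubgaussianMGF (fun S => Y (S i) - q) ((‖(1 : ℝ) - 0‖₊ / 2) ^ 2)
        (Measure.pi fun _ : Fin n => jointMeasure d p₁ p₀ q) := fun i =>
    HasSubgaussianMGF.of_map (X := fun y => Y y - q) (measurable_pi_apply i).aemeasurable
      (by rwa [(measurePreserving_eval _ i).map_eq])
  have hindep := iIndepFun_pi (μ := fun _ : Fin n => jointMeasure d p₁ p₀ q)
    (X := fun _ y => Y y - q) fun _ => (hY.sub measurable_const).aemeasurable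
  convert (HasSubgaussianMGF.sum_of_iIndepFun hindep (s := Finset.univ)
    fun i _ => hcoord i).const_mul (n : ℝ)⁻¹ using 1
  · funext S
    rw [Finset.sum_sub_distrib, Finset.sum_const, Finset.card_univ, Fintype.card_fin,
      nsmul_eq_mul]
    field_simp
    rfl
  · apply NNReal.eq
    change ((4 * n : ℝ≥0)⁻¹ : ℝ) =
      (n : ℝ)⁻¹ ^ 2 * ((∑ _i : Fin n, (‖(1 : ℝ) - 0‖₊ / 2) ^ 2 : ℝ≥0) : ℝ)
    norm_num [Finset.sum_const]
    field_simp

end JointMeasure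

def lossDensity {E : Type*} (p₁ p₀ : E → ℝ) (q r : ℝ) (x : E) : ℝ :=
  q * (if r * p₁ x < (1 - r) * p₀ x then p₁ x else 0) +
    (1 - q) * (if (1 - r) * p₀ x ≤ r * p₁ x then p₀ x else 0)

def marginBand (d : ℕ) (p₁ p₀ : (Fin d → ℝ) → ℝ) (q t : ℝ) : Set (Fin d → ℝ) :=
  {x | 0 < |eta d p₁ p₀ q x - 1 / 2| ∧ |eta d p₁ p₀ q x - 1 / 2| ≤ t}

section Risk

variable {d : ℕ} {p₁ p₀ : (Fin d → ℝ) → ℝ}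

lemma measurableSet_marginBand (hm₁ : Measurable p₁) (hm₀ : Measurable p₀) (q t : ℝ) :
    MeasurableSet (marginBand d p₁ p₀ q t) := by
  unfold marginBand eta
  measurability

lemma abs_eta_sub_half {q : ℝ} (x : Fin d → ℝ)
    (hs : 0 < q * p₁ x + (1 - q) * p₀ x) :
    |eta d p₁ p₀ q x - 1 / 2| =
      |q * p₁ x - (1 - q) * p₀ x| / (2 * (q * p₁ x + (1 - q) * p₀ x)) := by
  have h : eta d p₁ p₀ q x - 1 / 2 =
      (q * p₁ x - (1 - q) * p₀ x) / (2 * (q * p₁ x + (1 - q) * p₀ x)) := by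
    rw [eta]; field_simp; ring
  rw [h, abs_div, abs_of_pos (by positivity : (0 : ℝ) < 2 * (q * p₁ x + (1 - q) * p₀ x))]

lemma lossDensity_sub_le {θ q r : ℝ} (hθ : 0 < θ)
    (hq : q ∈ Icc θ (1 - θ)) (x : Fin d → ℝ) (hp₁ : 0 ≤ p₁ x) (hp₀ : 0 ≤ p₀ x) :
    lossDensity p₁ p₀ q r x - lossDensity p₁ p₀ q q x ≤
      (marginBand d p₁ p₀ q (|r - q| / (2 * θ))).indicator
        (fun x => |r - q| / θ * (q * p₁ x + (1 - q) * p₀ x)) x := by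
  obtain ⟨hθq, hq1⟩ := hq
  have ha : 0 ≤ q * p₁ x := mul_nonneg (by linarith) hp₁
  have hb : 0 ≤ (1 - q) * p₀ x := mul_nonneg (by linarith) hp₀
  have hmass : θ * (p₁ x + p₀ x) ≤ q * p₁ x + (1 - q) * p₀ x := by nlinarith
  have hflip := ite_flip_le (q * p₁ x) ((1 - q) * p₀ x) (r * p₁ x) ((1 - r) * p₀ x)
  rw [show r * p₁ x - (1 - r) * p₀ x - (q * p₁ x - (1 - q) * p₀ x) =
    (r - q) * (p₁ x + p₀ x) by ring, abs_mul, abs_of_nonneg (add_nonneg hp₁ hp₀)] at hflip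
  simp only [lossDensity, mul_ite, mul_zero]
  refine hflip.trans ?_
  split_ifs with hcond
  · obtain ⟨hpos, hshift⟩ := hcond
    have hs : 0 < q * p₁ x + (1 - q) * p₀ x :=
      hpos.trans_le (abs_sub_le_iff.2 ⟨by linarith, by linarith⟩)
    have hbound :
        |q * p₁ x - (1 - q) * p₀ x| * θ ≤ |r - q| * (q * p₁ x + (1 - q) * p₀ x) := by
      nlinarith [abs_nonneg (r - q)]
    rw [indicator_of_mem]
    · rw [div_mul_eq_mul_div, le_div_iff₀ hθ]
      exact hbound
    · rw [marginBand, mem_ofPred_eq, abs_eta_sub_half x hs]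
      refine ⟨by positivity, ?_⟩
      rw [div_le_div_iff₀ (by positivity) (by positivity)]
      nlinarith
  · exact indicator_apply_nonneg fun _ => mul_nonneg (by positivity) (add_nonneg ha hb)

lemma integrable_P1_integrand (h₁ : IsProbDensity p₁ volume) (hm₀ : Measurable p₀)
    (r : ℝ) :
    Integrable fun x => if r * p₁ x < (1 - r) * p₀ x then p₁ x else 0 :=
  have hm₁ := h₁.measurable
  h₁.integrable.ite_zero (measurableSet_lt (by fun_prop) (by fun_prop))

lemma integrable_P0_integrand (h₀ : IsProbDensity p₀ volume) (hm₁ : Measurable p₁)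
    (r : ℝ) :
    Integrable fun x => if (1 - r) * p₀ x ≤ r * p₁ x then p₀ x else 0 :=
  have hm₀ := h₀.measurable
  h₀.integrable.ite_zero (measurableSet_le (by fun_prop) (by fun_prop))

lemma integrable_lossDensity (h₁ : IsProbDensity p₁ volume) (h₀ : IsProbDensity p₀ volume)
    (q r : ℝ) : Integrable (lossDensity p₁ p₀ q r) :=
  ((integrable_P1_integrand h₁ h₀.measurable r).const_mul q).add
    ((integrable_P0_integrand h₀ h₁.measurable r).const_mul (1 - q))

lemma risk_eq_integral_lossDensity (h₁ : IsProbDensity p₁ volume)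
    (h₀ : IsProbDensity p₀ volume) (q r : ℝ) :
    risk d p₁ p₀ q r = ∫ x, lossDensity p₁ p₀ q r x := by
  rw [risk, P1, P0, ← integral_const_mul, ← integral_const_mul,
    ← integral_add ((integrable_P1_integrand h₁ h₀.measurable r).const_mul q)
      ((integrable_P0_integrand h₀ h₁.measurable r).const_mul (1 - q))]
  rfl

lemma margX_toReal_eq_setIntegral (h₁ : IsProbDensity p₁ volume)
    (h₀ : IsProbDensity p₀ volume) {q : ℝ} (hq : q ∈ Icc (0 : ℝ) 1)
    {s : Set (Fin d → ℝ)} (hs : MeasurableSet s) :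
    (margX d p₁ p₀ q s).toReal = ∫ x in s, (q * p₁ x + (1 - q) * p₀ x) := by
  have hm₁ := h₁.measurable; have hm₀ := h₀.measurable
  have hnonneg : ∀ x, 0 ≤ q * p₁ x + (1 - q) * p₀ x := fun x =>
    add_nonneg (mul_nonneg hq.1 (h₁.nonneg x)) (mul_nonneg (sub_nonneg.2 hq.2) (h₀.nonneg x))
  rw [margX, withDensity_apply _ hs,
    integral_eq_lintegral_of_nonneg_ae (ae_of_all _ hnonneg) (by fun_prop)]

lemma risk_sub_risk_le (h₁ : IsProbDensity p₁ volume) (h₀ : IsProbDensity p₀ volume)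
    {θ q C₀ α : ℝ} (hθ : 0 < θ) (hα : 0 < 1 + α) (hq : q ∈ Icc θ (1 - θ))
    (hMA : MA d p₁ p₀ q C₀ α) (r : ℝ) :
    risk d p₁ p₀ q r - risk d p₁ p₀ q q ≤ 2 * C₀ * (|r - q| / (2 * θ)) ^ (1 + α) := by
  rcases eq_or_ne r q with rfl | hrq
  · simp [Real.zero_rpow hα.ne']
  set t := |r - q| / (2 * θ) with ht_def
  have ht : 0 < t := by positivity [sub_ne_zero.2 hrq]
  set E := marginBand d p₁ p₀ q t
  have hE : MeasurableSet E := measurableSet_marginBand h₁.measurable h₀.measurable q t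
  have hq01 : q ∈ Icc (0 : ℝ) 1 := ⟨hθ.le.trans hq.1, hq.2.trans (by linarith)⟩
  calc risk d p₁ p₀ q r - risk d p₁ p₀ q q
      = ∫ x, (lossDensity p₁ p₀ q r x - lossDensity p₁ p₀ q q x) := by
        rw [risk_eq_integral_lossDensity h₁ h₀, risk_eq_integral_lossDensity h₁ h₀,
          integral_sub (integrable_lossDensity h₁ h₀ q r)
            (integrable_lossDensity h₁ h₀ q q)]
    _ ≤ ∫ x, E.indicator (fun x => |r - q| / θ * (q * p₁ x + (1 - q) * p₀ x)) x :=
        integral_mono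
          ((integrable_lossDensity h₁ h₀ q r).sub (integrable_lossDensity h₁ h₀ q q))
          (((h₁.integrable.const_mul q).add (h₀.integrable.const_mul (1 - q))).const_mul
            _ |>.indicator hE)
          fun x => lossDensity_sub_le hθ hq x (h₁.nonneg x) (h₀.nonneg x)
    _ = 2 * t * (margX d p₁ p₀ q E).toReal := by
        rw [integral_indicator hE, integral_const_mul,
          margX_toReal_eq_setIntegral h₁ h₀ hq01 hE]
        congr 1
        rw [ht_def]
        field_simp
    _ ≤ 2 * t * (C₀ * t ^ α) := by gcongr; exact hMA t ht
    _ = 2 * C₀ * t ^ (1 + α) := by rw [Real.rpow_add ht, Real.rpow_one]; ring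

end Risk

/-- `trimmedMLE` factors through the finitely many label configurations, so `g` need not be
measurable. -/
lemma integrable_comp_trimmedMLE {d n : ℕ} {θ : ℝ}
    {μ : Measure (Fin n → (Fin d → ℝ) × Bool)} [IsFiniteMeasure μ] (g : ℝ → ℝ) :
    Integrable (fun S => g (trimmedMLE d θ n S)) μ := by
  set labels : (Fin n → (Fin d → ℝ) × Bool) → Fin n → Bool := fun S i => (S i).2
  have hlabels : Measurable labels := by fun_prop
  have hfin : Integrable (fun b : Fin n → Bool =>
        g (max θ (min (1 - θ) ((∑ i, if b i = true then (1 : ℝ) else 0) / n))))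
      (μ.map labels) :=
    Integrable.of_finite
  exact hfin.comp_measurable hlabels

lemma risk_trimmedMLE_sub_le {d n : ℕ} {p₁ p₀ : (Fin d → ℝ) → ℝ} {θ q C₀ α : ℝ}
    (h₁ : IsProbDensity p₁ volume) (h₀ : IsProbDensity p₀ volume) (hθ : 0 < θ)
    (hC₀ : 0 ≤ C₀) (hα : 0 < 1 + α) (hq : q ∈ Icc θ (1 - θ))
    (hMA : MA d p₁ p₀ q C₀ α) (S : Fin n → (Fin d → ℝ) × Bool) :
    risk d p₁ p₀ q (trimmedMLE d θ n S) - risk d p₁ p₀ q q ≤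
      2 * C₀ / (2 * θ) ^ (1 + α) *
        |(∑ i, if (S i).2 = true then (1 : ℝ) else 0) / n - q| ^ (1 + α) := by
  set z := (∑ i, if (S i).2 = true then (1 : ℝ) else 0) / n
  have hclamp : |trimmedMLE d θ n S - q| ≤ |z - q| := by
    have h := abs_projIcc_sub_projIcc (c := z) (d := q) (hq.1.trans hq.2)
    rwa [projIcc_of_mem _ hq] at h
  calc _ ≤ 2 * C₀ * (|trimmedMLE d θ n S - q| / (2 * θ)) ^ (1 + α) :=
        risk_sub_risk_le h₁ h₀ hθ hα hq hMA _
    _ ≤ 2 * C₀ * (|z - q| / (2 * θ)) ^ (1 + α) := by gcongr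
    _ = _ := by rw [div_rpow (abs_nonneg _) (by positivity)]; ring

theorem stmt_8_general (d : ℕ) (θ : ℝ) (hθ : θ ∈ Set.Ioo (0 : ℝ) (1 / 2))
    (α : ℝ) (hα : 0 ≤ α) (C₀ : ℝ) (hC₀ : 0 < C₀) :
    ∃ C : ℝ, 0 < C ∧ ∀ n : ℕ, 1 ≤ n →
      ∀ p₁ p₀ : (Fin d → ℝ) → ℝ, ∀ q : ℝ,
        Measurable p₁ → (∀ x, 0 ≤ p₁ x) → (∫ x, p₁ x) = 1 →
        Measurable p₀ → (∀ x, 0 ≤ p₀ x) → (∫ x, p₀ x) = 1 →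
        q ∈ Set.Icc θ (1 - θ) → MA d p₁ p₀ q C₀ α →
        (∫ S, risk d p₁ p₀ q (trimmedMLE d θ n S)
            ∂(Measure.pi fun _ : Fin n => jointMeasure d p₁ p₀ q)) -
          risk d p₁ p₀ q q ≤ C * (n : ℝ) ^ (-((1 + α) / 2)) := by
  obtain ⟨hθ0, -⟩ := hθ
  have hp : 0 < 1 + α := by linarith
  set K := 2 * C₀ / (2 * θ) ^ (1 + α)
  refine ⟨K * (2 * ((1 + α) / (4 * exp 1)) ^ ((1 + α) / 2)), by positivity, ?_⟩
  intro n hn p₁ p₀ q hm₁ hnn₁ hi₁ hm₀ hnn₀ hi₀ hq hMA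
  have h₁ : IsProbDensity p₁ volume := ⟨hm₁, hnn₁, hi₁⟩
  have h₀ : IsProbDensity p₀ volume := ⟨hm₀, hnn₀, hi₀⟩
  have hq01 : q ∈ Icc (0 : ℝ) 1 := ⟨hθ0.le.trans hq.1, hq.2.trans (by linarith)⟩
  have := isProbabilityMeasure_jointMeasure h₁ h₀ hq01
  set μ := Measure.pi fun _ : Fin n => jointMeasure d p₁ p₀ q
  have hZ := hasSubgaussianMGF_labelFreq_sub h₁ h₀ hq01 hn
  have hrate : (1 + α) * ((4 * n : ℝ≥0)⁻¹ : ℝ≥0) / exp 1 =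
      (1 + α) / (4 * exp 1) * (n : ℝ)⁻¹ := by
    push_cast; field_simp
  calc _ = ∫ S, (risk d p₁ p₀ q (trimmedMLE d θ n S) - risk d p₁ p₀ q q) ∂μ := by
        rw [integral_sub (integrable_comp_trimmedMLE _) (integrable_const _), integral_const,
          probReal_univ, one_smul]
    _ ≤ ∫ S, K * |(∑ i, if (S i).2 = true then (1 : ℝ) else 0) / n - q| ^ (1 + α) ∂μ :=
        integral_mono (integrable_comp_trimmedMLE (risk d p₁ p₀ q · - risk d p₁ p₀ q q))
          ((hZ.integrable_abs_rpow hp).const_mul K)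
          (risk_trimmedMLE_sub_le h₁ h₀ hθ0 hC₀.le hp hq hMA)
    _ ≤ K * (2 * ((1 + α) * ((4 * n : ℝ≥0)⁻¹ : ℝ≥0) / exp 1) ^ ((1 + α) / 2)) := by
        rw [integral_const_mul]
        gcongr
        exact hZ.integral_abs_rpow_le (by positivity) hp
    _ = _ := by
        rw [hrate, mul_rpow (by positivity) (by positivity), inv_rpow (Nat.cast_nonneg n),
          ← rpow_neg (Nat.cast_nonneg n)]
        ring

/-- Theorem 4: under MA(C₀,α) with `q ∈ [θ,1−θ]`, the trimmed MLE based on labeled data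
attains the excess-risk rate `C·n^{-(1+α)/2}`. -/
theorem stmt_8 (d : ℕ) (hd : 1 ≤ d) (θ : ℝ) (hθ : θ ∈ Set.Ioo (0 : ℝ) (1 / 2))
    (α : ℝ) (hα : 0 ≤ α) (C₀ : ℝ) (hC₀ : 0 < C₀) :
    ∃ C : ℝ, 0 < C ∧ ∀ n : ℕ, 1 ≤ n →
      ∀ p₁ p₀ : (Fin d → ℝ) → ℝ, ∀ q : ℝ,
        Measurable p₁ → (∀ x, 0 ≤ p₁ x) → (∫ x, p₁ x) = 1 →
        Measurable p₀ → (∀ x, 0 ≤ p₀ x) → (∫ x, p₀ x) = 1 →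
        q ∈ Set.Icc θ (1 - θ) → MA d p₁ p₀ q C₀ α →
        (∫ S, risk d p₁ p₀ q (trimmedMLE d θ n S)
            ∂(Measure.pi fun _ : Fin n => jointMeasure d p₁ p₀ q)) -
          risk d p₁ p₀ q q ≤ C * (n : ℝ) ^ (-((1 + α) / 2)) :=
  stmt_8_general d θ hθ α hα C₀ hC₀
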